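/- The majorizing function bounds stress: for any n×d matrices X and Y with the rows of Y pairwise distinct, f^Y(X) := ∑_{i<j} D_{ij}² + tr(XᵀLX) − 2·∑_{i<j} D_{ij}⟨X_i − X_j, Y_i − Y_j⟩/‖Y_i − Y_j‖ satisfies f^Y(X) ≥ stress(X) := ∑_{i<j} (‖X_i − X_j‖ − D_{ij})², with equality when X = Y. -/

import Mathlib

open Finset

/-- The complete-graph Laplacian. -/
def completeLaplacian (n : ℕ) : Matrix (Fin n) (Fin n) ℝ :=
  fun i j => if i = j then (n : ℝ) - 1 else -1

/-- Euclidean norm of the difference of rows `i` and `j` of a matrix. -/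
noncomputable def rowDist {n d : ℕ} (X : Matrix (Fin n) (Fin d) ℝ) (i j : Fin n) : ℝ :=
  Real.sqrt (∑ k : Fin d, (X i k - X j k) ^ 2)

/-- Inner product of the row differences of `X` and `Y`. -/
def rowInner {n d : ℕ} (X Y : Matrix (Fin n) (Fin d) ℝ) (i j : Fin n) : ℝ :=
  ∑ k : Fin d, (X i k - X j k) * (Y i k - Y j k)

/-- The stress function. -/
noncomputable def stress {n d : ℕ} (D : Matrix (Fin n) (Fin n) ℝ)
    (X : Matrix (Fin n) (Fin d) ℝ) : ℝ :=
  ∑ i : Fin n, ∑ j : Fin n, if i < j then (rowDist X i j - D i j) ^ 2 else 0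

/-- The majorizing function `f^Y(X)`. -/
noncomputable def majorizer {n d : ℕ} (D : Matrix (Fin n) (Fin n) ℝ)
    (Y X : Matrix (Fin n) (Fin d) ℝ) : ℝ :=
  (∑ i : Fin n, ∑ j : Fin n, if i < j then (D i j) ^ 2 else 0)
    + Matrix.trace (X.transpose * completeLaplacian n * X)
    - 2 * ∑ i : Fin n, ∑ j : Fin n,
        if i < j then D i j * rowInner X Y i j / rowDist Y i j else 0

/-! Expanding `tr(XᵀLX) = ∑_{i<j} ‖X_i − X_j‖²` turns `f^Y(X) − stress(X)` into
`2 ∑_{i<j} D_{ij} (‖X_i − X_j‖ − ⟨X_i − X_j, Y_i − Y_j⟩ / ‖Y_i − Y_j‖)`, whose terms are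
nonnegative by Cauchy–Schwarz and vanish at `X = Y`. -/

open Matrix

section PairSums

variable {ι M : Type*} [Fintype ι] [LinearOrder ι] [AddCommMonoid M]

theorem sum_sum_eq_two_nsmul_sum_sum_ite_lt_add_sum_diag (f : ι → ι → M)
    (hf : ∀ i j, f i j = f j i) :
    ∑ i, ∑ j, f i j = 2 • (∑ i, ∑ j, if i < j then f i j else 0) + ∑ i, f i i := by
  have hsplit : ∀ i j, f i j = (if i < j then f i j else 0) + (if j < i then f j i else 0)
      + (if i = j then f i i else 0) := by
    intro i j
    rcases lt_trichotomy i j with h | rfl | h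
    · simp [h, h.not_gt, h.ne]
    · simp
    · simp [h, h.not_gt, h.ne', hf i j]
  have hswap : ∑ i, ∑ j, (if j < i then f j i else 0)
      = ∑ i, ∑ j, (if i < j then f i j else 0) := sum_comm
  rw [sum_congr rfl fun i _ => sum_congr rfl fun j _ => hsplit i j]
  simp only [sum_add_distrib, hswap, sum_ite_eq, mem_univ, if_true, two_nsmul]

end PairSums

theorem completeLaplacian_mulVec {n : ℕ} (a : Fin n → ℝ) :
    completeLaplacian n *ᵥ a = fun i => n * a i - ∑ j, a j := by
  ext i
  have hrow : ∀ j, completeLaplacian n i j * a j = (if i = j then n * a j else 0) - a j := by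
    intro j
    by_cases h : i = j
    · simp [completeLaplacian, h]; ring
    · simp [completeLaplacian, h]
  simp only [mulVec, dotProduct, hrow, sum_sub_distrib, sum_ite_eq, mem_univ, if_true]

theorem dotProduct_completeLaplacian_mulVec {n : ℕ} (a : Fin n → ℝ) :
    a ⬝ᵥ (completeLaplacian n *ᵥ a) = ∑ i, ∑ j, if i < j then (a i - a j) ^ 2 else 0 := by
  have hpairs := sum_sum_eq_two_nsmul_sum_sum_ite_lt_add_sum_diag (fun i j => (a i - a j) ^ 2)
    fun i j => by ring
  have hexpand : ∑ i, ∑ j, (a i - a j) ^ 2 = 2 * (n * ∑ i, a i ^ 2 - (∑ i, a i) ^ 2) := by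
    simp only [sub_sq, sum_add_distrib, sum_sub_distrib, sum_const, card_univ, Fintype.card_fin,
      nsmul_eq_mul, ← mul_sum, ← sum_mul]
    ring
  have hdiag : ∑ i, (a i - a i) ^ 2 = 0 := by simp
  rw [hdiag, add_zero, two_nsmul, hexpand] at hpairs
  have hquad : a ⬝ᵥ (completeLaplacian n *ᵥ a) = n * ∑ i, a i ^ 2 - (∑ i, a i) ^ 2 := by
    simp only [completeLaplacian_mulVec, dotProduct, mul_sub, sum_sub_distrib, mul_sum]
    congr 1
    · exact sum_congr rfl fun _ _ => by ring
    · rw [sq, sum_mul_sum]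
  linarith

theorem trace_transpose_mul_mul {m n R : Type*} [Fintype m] [Fintype n] [CommSemiring R]
    (X : Matrix m n R) (A : Matrix m m R) :
    trace (Xᵀ * A * X) = ∑ k, Xᵀ k ⬝ᵥ (A *ᵥ Xᵀ k) := by
  simp only [trace, Matrix.diag, mul_apply, transpose_apply, dotProduct, mulVec,
    sum_mul, mul_sum, mul_assoc]
  refine sum_congr rfl fun _ _ => ?_
  exact sum_comm

section RowGeometry

variable {n d : ℕ} (X Y : Matrix (Fin n) (Fin d) ℝ) (i j : Fin n)

theorem rowDist_nonneg : 0 ≤ rowDist X i j := Real.sqrt_nonneg _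

theorem rowDist_sq : rowDist X i j ^ 2 = ∑ k, (X i k - X j k) ^ 2 :=
  Real.sq_sqrt (sum_nonneg fun _ _ => sq_nonneg _)

theorem rowInner_self : rowInner X X i j = rowDist X i j ^ 2 := by
  rw [rowDist_sq]
  exact sum_congr rfl fun _ _ => (sq _).symm

theorem rowInner_le_rowDist_mul_rowDist : rowInner X Y i j ≤ rowDist X i j * rowDist Y i j :=
  Real.sum_mul_le_sqrt_mul_sqrt _ _ _

theorem rowInner_div_rowDist_le : rowInner X Y i j / rowDist Y i j ≤ rowDist X i j :=
  div_le_of_le_mul₀ (rowDist_nonneg Y i j) (rowDist_nonneg X i j)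
    (rowInner_le_rowDist_mul_rowDist X Y i j)

end RowGeometry

theorem trace_transpose_mul_completeLaplacian_mul {n d : ℕ} (X : Matrix (Fin n) (Fin d) ℝ) :
    trace (Xᵀ * completeLaplacian n * X)
      = ∑ i, ∑ j, if i < j then rowDist X i j ^ 2 else 0 := by
  simp only [trace_transpose_mul_mul, dotProduct_completeLaplacian_mulVec, transpose_apply,
    rowDist_sq]
  rw [sum_comm]
  refine sum_congr rfl fun i _ => ?_
  rw [sum_comm]
  simp only [sum_ite_irrel, sum_const_zero]

theorem majorizer_eq_sum {n d : ℕ} (D : Matrix (Fin n) (Fin n) ℝ)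
    (Y X : Matrix (Fin n) (Fin d) ℝ) :
    majorizer D Y X = ∑ i, ∑ j, if i < j then
      D i j ^ 2 + rowDist X i j ^ 2 - 2 * (D i j * rowInner X Y i j / rowDist Y i j) else 0 := by
  rw [majorizer, trace_transpose_mul_completeLaplacian_mul]
  simp only [mul_sum, ← sum_add_distrib, ← sum_sub_distrib]
  refine sum_congr rfl fun i _ => sum_congr rfl fun j _ => ?_
  split_ifs <;> ring

theorem majorizer_ge_stress_general (n d : ℕ) (D : Matrix (Fin n) (Fin n) ℝ)
    (hDnonneg : ∀ i j, 0 ≤ D i j)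
    (X Y : Matrix (Fin n) (Fin d) ℝ) :
    majorizer D Y X ≥ stress D X ∧ (X = Y → majorizer D Y X = stress D X) := by
  rw [majorizer_eq_sum, stress]
  refine ⟨sum_le_sum fun i _ => sum_le_sum fun j _ => ?_, ?_⟩
  · split_ifs
    · have hcross := mul_le_mul_of_nonneg_left (rowInner_div_rowDist_le X Y i j) (hDnonneg i j)
      rw [← mul_div_assoc] at hcross
      linarith
    · rfl
  · rintro rfl
    refine sum_congr rfl fun i _ => sum_congr rfl fun j _ => ?_
    rw [rowInner_self, mul_div_assoc, sq (rowDist X i j), mul_self_div_self]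
    split_ifs <;> ring

/-- the majorizing function bounds stress, with equality when `X = Y`. -/
theorem majorizer_ge_stress (n d : ℕ) (D : Matrix (Fin n) (Fin n) ℝ)
    (hDsymm : D.IsSymm) (hDnonneg : ∀ i j, 0 ≤ D i j) (hDdiag : ∀ i, D i i = 0)
    (X Y : Matrix (Fin n) (Fin d) ℝ)
    (hY : ∀ i j, i ≠ j → Y i ≠ Y j) :
    majorizer D Y X ≥ stress D X ∧ (X = Y → majorizer D Y X = stress D X) :=
  majorizer_ge_stress_general n d D hDnonneg X Y
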